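/- arXiv:math/0112153 — 2 statements merged into one kernel-verified Lean document; each statement's English description precedes it below -/
import Mathlib

section
/- An $\omega$-invariant set $X \subset \Gamma$ is prime if and only if for any $\gamma_1, \gamma_2 \in X$ and any neighborhoods $U_1$ of $\gamma_1$ and $U_2$ of $\gamma_2$, there exist $\gamma \in X$ and words $\mu_1, \mu_2 \in \mathcal{W}_\infty$ with $\gamma + \omega_{\mu_1} \in U_1$ and $\gamma + \omega_{\mu_2} \in U_2$. -/
open Set Filter Topology

variable {Γ : Type*}

/-- The translate `X + g` of a set. -/
def trSet [Add Γ] (X : Set Γ) (g : Γ) : Set Γ := (fun x => x + g) '' X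

/-- `X` is ω-invariant: closed and `X + ω i ⊆ X` for all `i ≥ 1`. -/
def OmegaInv [Add Γ] [TopologicalSpace Γ] (ω : ℕ → Γ) (X : Set Γ) : Prop :=
  IsClosed X ∧ ∀ i, 1 ≤ i → trSet X (ω i) ⊆ X

/-- The set `H_X`. -/
def HX [Add Γ] [TopologicalSpace Γ] (ω : ℕ → Γ) (X : Set Γ) : Set Γ :=
  closure (X \ ⋃ i ≥ 1, trSet X (ω i)) ∪
    ⋂ n ≥ 1, closure (⋃ i ≥ n, trSet X (ω i))

/-- An ω-invariant pair `(X, X^∞)`. -/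
def OmegaInvPair [Add Γ] [TopologicalSpace Γ] (ω : ℕ → Γ) (X Xinf : Set Γ) : Prop :=
  OmegaInv ω X ∧ IsClosed Xinf ∧ HX ω X ⊆ Xinf ∧ Xinf ⊆ X

/-- The set `X^{(n)} = X^∞ ∪ ⋃_{i ≥ n+1} (X + ω_i)`. -/
def Xn [Add Γ] [TopologicalSpace Γ] (ω : ℕ → Γ) (X Xinf : Set Γ) (n : ℕ) : Set Γ :=
  Xinf ∪ ⋃ i ≥ n + 1, trSet X (ω i)

/-- A word: a finite list of positive integers. -/
def IsWord (μ : List ℕ) : Prop := ∀ i ∈ μ, 1 ≤ i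

/-- A word with letters in `{1, …, n}`. -/
def IsWordLe (n : ℕ) (μ : List ℕ) : Prop := ∀ i ∈ μ, 1 ≤ i ∧ i ≤ n

/-- `ω_μ`, the sum of `ω i` over the letters of `μ`. -/
def wsum [AddCommMonoid Γ] (ω : ℕ → Γ) (μ : List ℕ) : Γ := (μ.map ω).sum

/-- The semigroup (with 0) generated by the `ω_i`. -/
def sgSet [AddCommMonoid Γ] (ω : ℕ → Γ) : Set Γ :=
  {γ | ∃ μ : List ℕ, IsWord μ ∧ γ = wsum ω μ}

/-- Primeness condition for an ω-invariant set. -/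
def PrimeCond [Add Γ] [TopologicalSpace Γ] (ω : ℕ → Γ) (X : Set Γ) : Prop :=
  ∀ X1 X2 : Set Γ, OmegaInv ω X1 → OmegaInv ω X2 → X ⊆ X1 ∪ X2 → X ⊆ X1 ∨ X ⊆ X2

/-- Primeness condition for an ω-invariant pair (componentwise inclusion/union). -/
def PrimePair [Add Γ] [TopologicalSpace Γ] (ω : ℕ → Γ) (X Xinf : Set Γ) : Prop :=
  ∀ X1 X1i X2 X2i : Set Γ, OmegaInvPair ω X1 X1i → OmegaInvPair ω X2 X2i →
    X ⊆ X1 ∪ X2 → Xinf ⊆ X1i ∪ X2i →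
    (X ⊆ X1 ∧ Xinf ⊆ X1i) ∨ (X ⊆ X2 ∧ Xinf ⊆ X2i)

/-!
If no point of `X` has orbit entering both `U₁` and `U₂` (shrunk to open sets), then `X` is
covered by the two ω-invariant sets of points whose orbit avoids `U₁`, resp. `U₂`; primeness
puts `X` inside one of them, which is absurd at `γ₁`, resp. `γ₂`. Conversely, if `X ⊆ X₁ ∪ X₂`
with `γ₁ ∈ X \ X₁` and `γ₂ ∈ X \ X₂`, a common point `γ ∈ X` with translates in `X₁ᶜ` and `X₂ᶜ`
lies in neither `X₁` nor `X₂`, since both are closed under adding words.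
-/

section Words

variable [AddCommMonoid Γ] (ω : ℕ → Γ)

@[simp]
lemma wsum_nil : wsum ω [] = 0 := rfl

@[simp]
lemma wsum_cons (i : ℕ) (μ : List ℕ) : wsum ω (i :: μ) = ω i + wsum ω μ := by
  simp [wsum]

lemma isWord_nil : IsWord [] := by simp [IsWord]

lemma isWord_cons {i : ℕ} {μ : List ℕ} : IsWord (i :: μ) ↔ 1 ≤ i ∧ IsWord μ :=
  List.forall_mem_cons

end Words

lemma OmegaInv.add_wsum_mem [AddCommMonoid Γ] [TopologicalSpace Γ] {ω : ℕ → Γ} {Z : Set Γ}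
    (hZ : OmegaInv ω Z) {μ : List ℕ} (hμ : IsWord μ) {x : Γ} (hx : x ∈ Z) :
    x + wsum ω μ ∈ Z := by
  induction μ generalizing x with
  | nil => simpa using hx
  | cons i μ ih =>
    obtain ⟨hi, hμ⟩ := isWord_cons.mp hμ
    simpa [add_assoc] using ih hμ (hZ.2 i hi ⟨x, hx, rfl⟩)

def orbitAvoiding [AddCommMonoid Γ] (ω : ℕ → Γ) (V : Set Γ) : Set Γ :=
  {x | ∀ μ, IsWord μ → x + wsum ω μ ∉ V}

section OrbitAvoiding

variable [AddCommMonoid Γ] (ω : ℕ → Γ) (V : Set Γ)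

lemma orbitAvoiding_subset_compl : orbitAvoiding ω V ⊆ Vᶜ := fun x hx => by
  simpa using hx [] isWord_nil

lemma omegaInv_orbitAvoiding [TopologicalSpace Γ] [ContinuousAdd Γ] (hV : IsOpen V) :
    OmegaInv ω (orbitAvoiding ω V) := by
  refine ⟨?_, ?_⟩
  · simp only [orbitAvoiding, ofPred_forall]
    exact isClosed_iInter fun μ => isClosed_iInter fun _ =>
      hV.isClosed_compl.preimage (continuous_add_const _)
  · rintro i hi _ ⟨x, hx, rfl⟩ μ hμ
    simpa [add_assoc] using hx (i :: μ) (isWord_cons.mpr ⟨hi, hμ⟩)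

end OrbitAvoiding

section Prime

variable [AddCommMonoid Γ] [TopologicalSpace Γ] {ω : ℕ → Γ} {X : Set Γ}

lemma PrimeCond.exists_orbits_meet [ContinuousAdd Γ] (hp : PrimeCond ω X)
    {γ1 γ2 : Γ} (hγ1 : γ1 ∈ X) (hγ2 : γ2 ∈ X) {U1 U2 : Set Γ} (hU1 : U1 ∈ 𝓝 γ1)
    (hU2 : U2 ∈ 𝓝 γ2) :
    ∃ γ ∈ X, ∃ μ1 μ2 : List ℕ, IsWord μ1 ∧ IsWord μ2 ∧
      γ + wsum ω μ1 ∈ U1 ∧ γ + wsum ω μ2 ∈ U2 := by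
  by_contra! hnone
  have hcover : X ⊆ orbitAvoiding ω (interior U1) ∪ orbitAvoiding ω (interior U2) := by
    intro x hx
    by_contra! hx'
    simp only [mem_union, orbitAvoiding, mem_ofPred_eq, not_or, not_forall, not_not] at hx'
    obtain ⟨⟨μ1, hμ1, h1⟩, ⟨μ2, hμ2, h2⟩⟩ := hx'
    exact hnone x hx μ1 μ2 hμ1 hμ2 (interior_subset h1) (interior_subset h2)
  rcases hp _ _ (omegaInv_orbitAvoiding ω _ isOpen_interior)
      (omegaInv_orbitAvoiding ω _ isOpen_interior) hcover with h | h
  · exact orbitAvoiding_subset_compl ω _ (h hγ1) (mem_interior_iff_mem_nhds.mpr hU1)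
  · exact orbitAvoiding_subset_compl ω _ (h hγ2) (mem_interior_iff_mem_nhds.mpr hU2)

lemma primeCond_of_exists_orbits_meet
    (h : ∀ γ1 ∈ X, ∀ γ2 ∈ X, ∀ U1 ∈ 𝓝 γ1, ∀ U2 ∈ 𝓝 γ2,
      ∃ γ ∈ X, ∃ μ1 μ2 : List ℕ, IsWord μ1 ∧ IsWord μ2 ∧
        γ + wsum ω μ1 ∈ U1 ∧ γ + wsum ω μ2 ∈ U2) :
    PrimeCond ω X := by
  intro X1 X2 h1 h2 hsub
  by_contra! hnot
  obtain ⟨⟨γ1, hγ1X, hγ1⟩, ⟨γ2, hγ2X, hγ2⟩⟩ :=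
    And.imp Set.not_subset.mp Set.not_subset.mp hnot
  obtain ⟨γ, hγX, μ1, μ2, hμ1, hμ2, hm1, hm2⟩ :=
    h γ1 hγ1X γ2 hγ2X _ (h1.1.isOpen_compl.mem_nhds hγ1) _ (h2.1.isOpen_compl.mem_nhds hγ2)
  rcases hsub hγX with hγ | hγ
  · exact hm1 (h1.add_wsum_mem hμ1 hγ)
  · exact hm2 (h2.add_wsum_mem hμ2 hγ)

end Prime

theorem stmt5_general [AddCommGroup Γ] [TopologicalSpace Γ] [IsTopologicalAddGroup Γ]
    (ω : ℕ → Γ) (X : Set Γ) :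
    PrimeCond ω X ↔
      ∀ γ1 ∈ X, ∀ γ2 ∈ X, ∀ U1 ∈ 𝓝 γ1, ∀ U2 ∈ 𝓝 γ2,
        ∃ γ ∈ X, ∃ μ1 μ2 : List ℕ, IsWord μ1 ∧ IsWord μ2 ∧
          γ + wsum ω μ1 ∈ U1 ∧ γ + wsum ω μ2 ∈ U2 :=
  ⟨fun hp _ hγ1 _ hγ2 _ hU1 _ hU2 => hp.exists_orbits_meet hγ1 hγ2 hU1 hU2,
    primeCond_of_exists_orbits_meet⟩

theorem stmt5 [AddCommGroup Γ] [TopologicalSpace Γ] [IsTopologicalAddGroup Γ]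
    [LocallyCompactSpace Γ] [SecondCountableTopology Γ] [T2Space Γ]
    (ω : ℕ → Γ) (X : Set Γ) (hX : OmegaInv ω X) :
    PrimeCond ω X ↔
      ∀ γ1 ∈ X, ∀ γ2 ∈ X, ∀ U1 ∈ 𝓝 γ1, ∀ U2 ∈ 𝓝 γ2,
        ∃ γ ∈ X, ∃ μ1 μ2 : List ℕ, IsWord μ1 ∧ IsWord μ2 ∧
          γ + wsum ω μ1 ∈ U1 ∧ γ + wsum ω μ2 ∈ U2 :=
  stmt5_general ω X
end

section
/- Let $\gamma \notin H_X$. The $\omega$-invariant pair $(X, H_X \cup \{\gamma\})$ is prime if and only if $X = \gamma + \overline{\mathrm{sg}}(\omega)$. -/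
open Set Filter Topology

variable {Γ : Type*}

/-!
If `X = γ + closure sg(ω)`, every closed ω-invariant set containing `γ` contains `X`, and
`X \ ⋃ᵢ (X + ωᵢ)` lies in `closure {γ}` together with the limit points of the tails
`⋃_{i ≥ n} (X + ωᵢ)`. So for a pair `(X₁, X₁^∞)` with `γ ∈ X₁^∞` we get `X ⊆ X₁`, the tails of `X`
lie in those of `X₁`, hence in `H_{X₁} ⊆ X₁^∞`, and the whole pair `(X, H_X ∪ {γ})` is covered by
whichever component catches `γ`. Conversely, cover `(X, H_X ∪ {γ})` by the pairs
`(γ + closure sg(ω), γ + closure sg(ω))` and `(X, H_X)`: since `γ ∉ H_X`, primeness forces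
`X ⊆ γ + closure sg(ω)`.
-/

lemma closure_biUnion_ge_subset {α : Type*} [TopologicalSpace α] {F : ℕ → Set α}
    (hF : ∀ i, IsClosed (F i)) (m : ℕ) :
    closure (⋃ i ≥ m, F i) ⊆ (⋃ i ≥ m, F i) ∪ ⋂ n ≥ m, closure (⋃ i ≥ n, F i) := by
  intro x hx
  refine or_iff_not_imp_right.mpr fun hxT => ?_
  obtain ⟨n, hmn, hxn⟩ : ∃ n ≥ m, x ∉ closure (⋃ i ≥ n, F i) := by
    simpa using hxT
  have hsplit : (⋃ i ≥ m, F i) ⊆ (⋃ i ∈ Ico m n, F i) ∪ ⋃ i ≥ n, F i := by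
    simp only [iUnion_subset_iff]
    intro i hi y hy
    rcases lt_or_ge i n with hin | hin
    · exact Or.inl (mem_biUnion ⟨hi, hin⟩ hy)
    · exact Or.inr (mem_biUnion hin hy)
  have hfin : IsClosed (⋃ i ∈ Ico m n, F i) :=
    (finite_Ico m n).isClosed_biUnion fun i _ => hF i
  have hx' := closure_mono hsplit hx
  rw [closure_union, hfin.closure_eq] at hx'
  rcases hx' with hx' | hx'
  · obtain ⟨i, ⟨hmi, _⟩, hxi⟩ := mem_iUnion₂.mp hx'
    exact mem_biUnion hmi hxi
  · exact absurd hx' hxn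

section Translates

variable [Add Γ] [TopologicalSpace Γ]

lemma isClosed_HX (ω : ℕ → Γ) (X : Set Γ) : IsClosed (HX ω X) :=
  isClosed_closure.union (isClosed_biInter fun _ _ => isClosed_closure)

lemma HX_subset {ω : ℕ → Γ} {X : Set Γ} (hX : OmegaInv ω X) : HX ω X ⊆ X := by
  have hU : closure (⋃ i ≥ 1, trSet X (ω i)) ⊆ X :=
    closure_minimal (iUnion₂_subset hX.2) hX.1
  refine union_subset (closure_minimal sdiff_subset hX.1) fun x hx => hU ?_
  exact mem_iInter₂.mp hx 1 le_rfl

lemma biInter_closure_trSet_mono (ω : ℕ → Γ) {X Y : Set Γ} (hXY : X ⊆ Y) :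
    ⋂ n ≥ 1, closure (⋃ i ≥ n, trSet X (ω i)) ⊆ ⋂ n ≥ 1, closure (⋃ i ≥ n, trSet Y (ω i)) :=
  iInter₂_mono fun _ _ => closure_mono (iUnion₂_mono fun _ _ => image_mono hXY)

end Translates

section Semigroup

variable [AddCommGroup Γ]

lemma zero_mem_sgSet (ω : ℕ → Γ) : (0 : Γ) ∈ sgSet ω :=
  ⟨[], fun _ h => absurd h List.not_mem_nil, rfl⟩

lemma add_mem_sgSet {ω : ℕ → Γ} {s : Γ} (hs : s ∈ sgSet ω) {i : ℕ} (hi : 1 ≤ i) :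
    s + ω i ∈ sgSet ω := by
  obtain ⟨μ, hμ, rfl⟩ := hs
  refine ⟨i :: μ, List.forall_mem_cons.mpr ⟨hi, hμ⟩, ?_⟩
  simp [wsum, add_comm]

lemma eq_zero_or_eq_add_of_mem_sgSet {ω : ℕ → Γ} {s : Γ} (hs : s ∈ sgSet ω) :
    s = 0 ∨ ∃ t ∈ sgSet ω, ∃ i ≥ 1, s = t + ω i := by
  obtain ⟨_ | ⟨i, μ⟩, hμ, rfl⟩ := hs
  · exact Or.inl rfl
  · obtain ⟨hi, hμ⟩ := List.forall_mem_cons.mp hμ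
    exact Or.inr ⟨wsum ω μ, ⟨μ, hμ, rfl⟩, i, hi, by simp [wsum, add_comm]⟩

lemma sgSet_induction {ω : ℕ → Γ} {p : Γ → Prop} (zero : p 0)
    (add : ∀ s i, 1 ≤ i → p s → p (s + ω i)) {s : Γ} (hs : s ∈ sgSet ω) : p s := by
  obtain ⟨μ, hμ, rfl⟩ := hs
  induction μ with
  | nil => exact zero
  | cons i μ ih =>
    obtain ⟨hi, hμ⟩ := List.forall_mem_cons.mp hμ
    simpa [wsum, add_comm] using add _ i hi (ih hμ)

end Semigroup

lemma self_mem_image_add_closure_sgSet [AddCommGroup Γ] [TopologicalSpace Γ] (ω : ℕ → Γ)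
    (γ : Γ) : γ ∈ (γ + ·) '' closure (sgSet ω) :=
  ⟨0, subset_closure (zero_mem_sgSet ω), add_zero γ⟩

section Orbit

variable [AddCommGroup Γ] [TopologicalSpace Γ] [IsTopologicalAddGroup Γ] {ω : ℕ → Γ}

lemma isClosed_trSet {X : Set Γ} (hX : IsClosed X) (g : Γ) : IsClosed (trSet X g) := by
  simpa [trSet] using (Homeomorph.addRight g).isClosedMap X hX

lemma image_add_closure_sgSet_eq (γ : Γ) :
    (γ + ·) '' closure (sgSet ω) = closure ((γ + ·) '' sgSet ω) := by
  simpa using (Homeomorph.addLeft γ).image_closure (sgSet ω)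

lemma omegaInv_image_add_closure_sgSet (γ : Γ) :
    OmegaInv ω ((γ + ·) '' closure (sgSet ω)) := by
  refine ⟨by simpa using (Homeomorph.addLeft γ).isClosedMap _ isClosed_closure, ?_⟩
  rintro i hi _ ⟨_, ⟨s, hs, rfl⟩, rfl⟩
  refine ⟨s + ω i, ?_, (add_assoc γ s (ω i)).symm⟩
  exact map_mem_closure (f := (· + ω i)) (continuous_add_const (ω i)) hs
    fun t ht => add_mem_sgSet ht hi

lemma image_add_closure_sgSet_subset {Y : Set Γ} (hY : OmegaInv ω Y) {γ : Γ} (hγ : γ ∈ Y) :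
    (γ + ·) '' closure (sgSet ω) ⊆ Y := by
  rw [image_add_closure_sgSet_eq]
  refine closure_minimal ?_ hY.1
  rintro _ ⟨s, hs, rfl⟩
  refine sgSet_induction (p := fun s => γ + s ∈ Y) (by simpa using hγ) ?_ hs
  intro s i hi hs
  rw [← add_assoc]
  exact hY.2 i hi ⟨_, hs, rfl⟩

lemma subset_closure_singleton_union_closure_biUnion_trSet {X : Set Γ} {γ : Γ}
    (hX : X = (γ + ·) '' closure (sgSet ω)) :
    X ⊆ closure {γ} ∪ closure (⋃ i ≥ 1, trSet X (ω i)) := by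
  rw [← closure_union]
  refine (hX.trans (image_add_closure_sgSet_eq γ)).trans_subset (closure_mono ?_)
  rintro _ ⟨s, hs, rfl⟩
  rcases eq_zero_or_eq_add_of_mem_sgSet hs with rfl | ⟨t, ht, i, hi, rfl⟩
  · exact Or.inl (add_zero γ)
  · exact Or.inr (mem_biUnion hi ⟨γ + t, hX ▸ ⟨t, subset_closure ht, rfl⟩, add_assoc γ t (ω i)⟩)

lemma subset_of_mem_of_eq_image_add_closure_sgSet {X Y Yinf : Set Γ} {γ : Γ}
    (hY : OmegaInvPair ω Y Yinf) (hγ : γ ∈ Yinf) (hX : X = (γ + ·) '' closure (sgSet ω)) :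
    X ⊆ Y ∧ HX ω X ∪ {γ} ⊆ Yinf := by
  obtain ⟨hYinv, hYinf, hHY, hYinfY⟩ := hY
  have hXY : X ⊆ Y := hX ▸ image_add_closure_sgSet_subset hYinv (hYinfY hγ)
  have hXc : IsClosed X := hX ▸ (omegaInv_image_add_closure_sgSet γ).1
  have htail : ⋂ n ≥ 1, closure (⋃ i ≥ n, trSet X (ω i)) ⊆ Yinf := fun x hx =>
    hHY (Or.inr (biInter_closure_trSet_mono ω hXY hx))
  have hhead : X \ ⋃ i ≥ 1, trSet X (ω i) ⊆ Yinf := by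
    rintro x ⟨hxX, hxU⟩
    rcases subset_closure_singleton_union_closure_biUnion_trSet hX hxX with hxγ | hxU'
    · exact closure_minimal (singleton_subset_iff.mpr hγ) hYinf hxγ
    · rcases closure_biUnion_ge_subset (fun i => isClosed_trSet hXc (ω i)) 1 hxU' with h | h
      · exact absurd h hxU
      · exact htail h
  exact ⟨hXY, union_subset (union_subset (closure_minimal hhead hYinf) htail)
    (singleton_subset_iff.mpr hγ)⟩

end Orbit

theorem stmt8_general [AddCommGroup Γ] [TopologicalSpace Γ] [IsTopologicalAddGroup Γ]
    (ω : ℕ → Γ) (X : Set Γ) (γ : Γ) (hγ : γ ∉ HX ω X)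
    (hpair : OmegaInvPair ω X (HX ω X ∪ {γ})) :
    PrimePair ω X (HX ω X ∪ {γ}) ↔ X = (fun s => γ + s) '' closure (sgSet ω) := by
  set B := (fun s => γ + s) '' closure (sgSet ω)
  have hX : OmegaInv ω X := hpair.1
  constructor
  · intro hprime
    have hB : OmegaInv ω B := omegaInv_image_add_closure_sgSet γ
    have hcover : HX ω X ∪ {γ} ⊆ B ∪ HX ω X :=
      union_subset subset_union_right
        (singleton_subset_iff.mpr (Or.inl (self_mem_image_add_closure_sgSet ω γ)))
    rcases hprime B B X (HX ω X) ⟨hB, hB.1, HX_subset hB, subset_rfl⟩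
        ⟨hX, isClosed_HX ω X, subset_rfl, HX_subset hX⟩ subset_union_right hcover with
      ⟨hXB, -⟩ | ⟨-, hγH⟩
    · exact hXB.antisymm (image_add_closure_sgSet_subset hX (hpair.2.2.2 (Or.inr rfl)))
    · exact absurd (hγH (Or.inr rfl)) hγ
  · rintro hXB X₁ X₁inf X₂ X₂inf h₁ h₂ - hinf
    rcases hinf (Or.inr rfl) with hγ₁ | hγ₂
    · exact Or.inl (subset_of_mem_of_eq_image_add_closure_sgSet h₁ hγ₁ hXB)
    · exact Or.inr (subset_of_mem_of_eq_image_add_closure_sgSet h₂ hγ₂ hXB)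

theorem stmt8 [AddCommGroup Γ] [TopologicalSpace Γ] [IsTopologicalAddGroup Γ]
    [LocallyCompactSpace Γ] [SecondCountableTopology Γ] [T2Space Γ]
    (ω : ℕ → Γ) (X : Set Γ) (γ : Γ) (hX : OmegaInv ω X) (hγ : γ ∉ HX ω X)
    (hpair : OmegaInvPair ω X (HX ω X ∪ {γ})) :
    PrimePair ω X (HX ω X ∪ {γ}) ↔ X = (fun s => γ + s) '' closure (sgSet ω) :=
  stmt8_general ω X γ hγ hpair
end
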